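/- If A is a set of positive integers with upper Banach density δ(A) = 1, then for every integer h ≥ 2 there exist pairwise disjoint subsets B_1, …, B_h of A such that δ(B_i) = 1 for all i = 1, …, h and B_1 + B_2 + ⋯ + B_h ⊆ A. -/

import Mathlib

open Filter Set

/-- `bF A n = max_{u ∈ ℕ₀} |A ∩ [u, u+n-1]|`. -/
noncomputable def bF (A : Set ℕ) (n : ℕ) : ℕ :=
  ⨆ u : ℕ, (A ∩ Set.Icc u (u + n - 1)).ncard

/-- Upper Banach density `δ(A) = limsup_{n→∞} bF A n / n`. -/
noncomputable def ubd (A : Set ℕ) : ℝ :=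
  Filter.limsup (fun n : ℕ => (bF A n : ℝ) / n) Filter.atTop

/-- The sumset `∑_{i ∈ I} B i = { ∑_{i∈I} a i : a i ∈ B i for each i ∈ I }`. -/
def sumset (B : ℕ → Set ℕ) (I : Finset ℕ) : Set ℕ :=
  {s : ℕ | ∃ a : ℕ → ℕ, (∀ i ∈ I, a i ∈ B i) ∧ s = ∑ i ∈ I, a i}

/-! If `ubd A = 1`, then `A` contains arbitrarily long intervals: otherwise every window of
length `m + 1` misses a point of `A`, and the density of `A` is at most `m / (m + 1)`.
Conversely a set containing arbitrarily long intervals has density `1`, so it suffices to find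
disjoint `B i ⊆ A`, each containing arbitrarily long intervals, with `∑ B i ⊆ A`.

Place the intervals `block k = [v k, v k + k]` (`v = blockStart`) so far apart that `A` even
contains `[v k, v k + k + h P k]`, where `P k = blockBound k` exceeds all earlier blocks, and let
`B i` be the union of the blocks with `k ≡ i (mod h)`. A sum of one element from each `B i`
uses `h` distinct blocks; its summand from the highest block `k` lies in `[v k, v k + k]` and
the other `h - 1` summands are below `P k`, so the sum lies in `[v k, v k + k + h P k] ⊆ A`. -/

section Density

variable {A : Set ℕ}

lemma ncard_inter_Icc_le (A : Set ℕ) (u v : ℕ) : (A ∩ Icc u v).ncard ≤ v + 1 - u :=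
  (ncard_le_ncard inter_subset_right (finite_Icc u v)).trans_eq (ncard_Icc_nat u v)

lemma ncard_inter_Icc_lt_of_not_subset {u v : ℕ} (h : ¬ Icc u v ⊆ A) :
    (A ∩ Icc u v).ncard < v + 1 - u :=
  (ncard_lt_ncard (inter_ssubset_right_iff.2 h) (finite_Icc u v)).trans_eq (ncard_Icc_nat u v)

lemma le_bF (A : Set ℕ) (n u : ℕ) : (A ∩ Icc u (u + n - 1)).ncard ≤ bF A n := by
  refine le_ciSup (f := fun w => (A ∩ Icc w (w + n - 1)).ncard) ⟨n + 1, ?_⟩ u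
  rintro _ ⟨w, rfl⟩
  exact (ncard_inter_Icc_le A w _).trans (by omega)

lemma bF_le (A : Set ℕ) {n : ℕ} (hn : n ≠ 0) : bF A n ≤ n :=
  ciSup_le fun u => (ncard_inter_Icc_le A u _).trans (by omega)

lemma ubd_eq_one_of_forall_Icc_subset (hA : ∀ m, ∃ u, Icc u (u + m) ⊆ A) : ubd A = 1 := by
  have hbF : ∀ n ≠ 0, bF A n = n := by
    intro n hn
    refine (bF_le A hn).antisymm ?_
    obtain ⟨u, hu⟩ := hA (n - 1)
    calc n = (A ∩ Icc u (u + n - 1)).ncard := by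
            rw [inter_eq_self_of_subset_right (by rwa [Nat.add_sub_assoc (by omega)]),
              ncard_Icc_nat]
            omega
      _ ≤ bF A n := le_bF A n u
  have hev : ∀ᶠ n : ℕ in atTop, (bF A n : ℝ) / n = 1 := by
    filter_upwards [eventually_ne_atTop 0] with n hn
    rw [hbF n hn, div_self (Nat.cast_ne_zero.2 hn)]
  rw [ubd, limsup_congr hev, limsup_const]

lemma ubd_le_of_eventually_bF_le {α β : ℝ}
    (hbF : ∀ᶠ n in atTop, (bF A n : ℝ) ≤ α * n + β) : ubd A ≤ α := by
  have hlim : Tendsto (fun n : ℕ => α + β / n) atTop (nhds α) := by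
    simpa using tendsto_const_nhds.add (tendsto_const_div_atTop_nhds_zero_nat β)
  calc ubd A ≤ limsup (fun n : ℕ => α + β / n) atTop := by
        refine limsup_le_limsup ?_ (isCoboundedUnder_le_of_le atTop fun n => by positivity)
          hlim.isBoundedUnder_le
        filter_upwards [hbF, eventually_ne_atTop 0] with n hn hn0
        have hpos : (0 : ℝ) < n := by positivity
        rw [div_le_iff₀ hpos, add_mul, div_mul_cancel₀ β hpos.ne']
        linarith
    _ = α := hlim.limsup_eq

lemma ncard_inter_Ico_le_of_forall_not_Icc_subset {m : ℕ} (hA : ∀ u, ¬ Icc u (u + m) ⊆ A)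
    (q u : ℕ) : (A ∩ Ico u (u + q * (m + 1))).ncard ≤ q * m := by
  induction q generalizing u with
  | zero => simp
  | succ q ih =>
    have hsplit : Ico u (u + (q + 1) * (m + 1)) =
        Icc u (u + m) ∪ Ico (u + (m + 1)) (u + (m + 1) + q * (m + 1)) := by
      ext x
      simp only [mem_Ico, mem_Icc, mem_union]
      have : (q + 1) * (m + 1) = q * (m + 1) + (m + 1) := by ring
      omega
    calc (A ∩ Ico u (u + (q + 1) * (m + 1))).ncard
        ≤ (A ∩ Icc u (u + m)).ncard +
            (A ∩ Ico (u + (m + 1)) (u + (m + 1) + q * (m + 1))).ncard := by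
          rw [hsplit, inter_union_distrib_left]
          exact ncard_union_le _ _
      _ ≤ m + q * m := by
          have := ncard_inter_Icc_lt_of_not_subset (hA u)
          have := ih (u + (m + 1))
          omega
      _ = (q + 1) * m := by ring

lemma exists_Icc_subset_of_ubd_eq_one (hA : ubd A = 1) (m : ℕ) : ∃ u, Icc u (u + m) ⊆ A := by
  by_contra! hmiss
  have hbF : ∀ n ≠ 0, (bF A n : ℝ) ≤ m / (m + 1) * n + m := by
    intro n hn
    have hle : bF A n ≤ (n / (m + 1) + 1) * m := by
      refine ciSup_le fun u => le_trans (ncard_le_ncard ?_ (toFinite _))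
        (ncard_inter_Ico_le_of_forall_not_Icc_subset hmiss _ u)
      refine inter_subset_inter_right _ fun x hx => ⟨hx.1, ?_⟩
      have := hx.2
      have := Nat.lt_div_mul_add (a := n) (Nat.add_one_pos m)
      rw [add_mul, one_mul]
      omega
    have hdiv : ((n / (m + 1) : ℕ) : ℝ) ≤ n / (m + 1) := by exact_mod_cast Nat.cast_div_le
    calc (bF A n : ℝ) ≤ ((n / (m + 1) : ℕ) + 1) * m := by exact_mod_cast hle
      _ ≤ (n / (m + 1) + 1) * m := by gcongr
      _ = m / (m + 1) * n + m := by ring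
  have hle := ubd_le_of_eventually_bF_le ((eventually_ne_atTop 0).mono hbF)
  rw [hA, le_div_iff₀ (by positivity)] at hle
  linarith

lemma exists_ge_Icc_subset (hA : ∀ m, ∃ u, Icc u (u + m) ⊆ A) (m b : ℕ) :
    ∃ u, b ≤ u ∧ Icc u (u + m) ⊆ A := by
  obtain ⟨u, hu⟩ := hA (b + m)
  exact ⟨u + b, by omega, (Icc_subset_Icc (by omega) (by omega)).trans hu⟩

end Density

lemma sum_le_add_card_mul {ι : Type*} [Fintype ι] [DecidableEq ι] (a : ι → ℕ) (i₀ : ι)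
    {M : ℕ} (ha : ∀ i ≠ i₀, a i ≤ M) : ∑ i, a i ≤ a i₀ + Fintype.card ι * M := by
  rw [← Finset.add_sum_erase _ _ (Finset.mem_univ i₀)]
  gcongr
  calc ∑ i ∈ Finset.univ.erase i₀, a i ≤ (Finset.univ.erase i₀).card • M :=
        Finset.sum_le_card_nsmul _ _ _ fun i hi => ha i (Finset.ne_of_mem_erase hi)
    _ ≤ Fintype.card ι * M := Nat.mul_le_mul_right _ (Finset.card_le_univ _)

section Blocks

variable (g : ℕ → ℕ) (h : ℕ)

def blockBound : ℕ → ℕ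
  | 0 => 0
  | k + 1 => g (k + h * blockBound k) + k + 1

def blockStart (k : ℕ) : ℕ := g (k + h * blockBound g h k)

def block (k : ℕ) : Set ℕ := Icc (blockStart g h k) (blockStart g h k + k)

def blockUnion (i : Fin h) : Set ℕ := ⋃ (k : ℕ) (_ : k % h = i), block g h k

variable {g h}

lemma blockBound_le_blockStart [NeZero h] (hg_ge : ∀ b, b ≤ g b) (k : ℕ) :
    blockBound g h k ≤ blockStart g h k :=
  le_trans (by nlinarith [NeZero.pos h]) (hg_ge _)

lemma blockStart_add_lt_blockBound [NeZero h] (hg_ge : ∀ b, b ≤ g b) {j k : ℕ} (hjk : j < k) :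
    blockStart g h j + j < blockBound g h k := by
  have hmono : Monotone (blockBound g h) := monotone_nat_of_le_succ fun k => by
    have := blockBound_le_blockStart (h := h) hg_ge k
    simp only [blockBound, blockStart] at this ⊢
    omega
  exact (Nat.lt_succ_self _).trans_le (hmono hjk)

lemma disjoint_block [NeZero h] (hg_ge : ∀ b, b ≤ g b) {j k : ℕ} (hjk : j ≠ k) :
    Disjoint (block g h j) (block g h k) := by
  wlog hlt : j < k generalizing j k
  · exact (this hjk.symm (by omega)).symm
  refine Set.disjoint_left.2 fun x hxj hxk => ?_
  have := blockStart_add_lt_blockBound (h := h) hg_ge hlt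
  have := blockBound_le_blockStart (h := h) hg_ge k
  simp only [block, mem_Icc] at hxj hxk
  omega

lemma pairwise_disjoint_blockUnion [NeZero h] (hg_ge : ∀ b, b ≤ g b) :
    Pairwise (Function.onFun Disjoint (blockUnion g h)) := by
  intro i j hij
  simp only [Function.onFun, blockUnion, disjoint_iUnion_left, disjoint_iUnion_right]
  intro k hk l hl
  exact disjoint_block hg_ge fun hkl => hij (Fin.ext (hk ▸ hl ▸ congrArg (· % h) hkl))

lemma exists_Icc_subset_blockUnion [NeZero h] (i : Fin h) (m : ℕ) :
    ∃ u, Icc u (u + m) ⊆ blockUnion g h i := by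
  refine ⟨blockStart g h (i + m * h), fun x hx => ?_⟩
  simp only [blockUnion, mem_iUnion]
  refine ⟨i + m * h, by simp [Nat.mod_eq_of_lt i.isLt], hx.1, ?_⟩
  have := hx.2
  have : m ≤ m * h := Nat.le_mul_of_pos_right m (NeZero.pos h)
  omega

variable {A : Set ℕ}

lemma Icc_blockStart_subset (hg : ∀ b, Icc (g b) (g b + b) ⊆ A) (k : ℕ) :
    Icc (blockStart g h k) (blockStart g h k + (k + h * blockBound g h k)) ⊆ A :=
  hg _

lemma blockUnion_subset (hg : ∀ b, Icc (g b) (g b + b) ⊆ A) (i : Fin h) :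
    blockUnion g h i ⊆ A := by
  simp only [blockUnion, iUnion_subset_iff]
  intro k _
  exact (Icc_subset_Icc_right (by omega)).trans (Icc_blockStart_subset hg k)

lemma sum_mem_of_mem_blockUnion [NeZero h] (hg_ge : ∀ b, b ≤ g b)
    (hg : ∀ b, Icc (g b) (g b + b) ⊆ A) (a : Fin h → ℕ)
    (ha : ∀ i, a i ∈ blockUnion g h i) : ∑ i, a i ∈ A := by
  simp only [blockUnion, mem_iUnion] at ha
  choose k hk hak using ha
  obtain ⟨i₀, hi₀⟩ := Finite.exists_max k
  have hbelow : ∀ i ≠ i₀, a i ≤ blockBound g h (k i₀) := by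
    intro i hi
    have hki : k i < k i₀ :=
      (hi₀ i).lt_of_ne fun hkK => hi (Fin.ext (hk i ▸ hk i₀ ▸ congrArg (· % h) hkK))
    exact (hak i).2.trans (blockStart_add_lt_blockBound hg_ge hki).le
  have hsum := sum_le_add_card_mul a i₀ hbelow
  have hlow : a i₀ ≤ ∑ i, a i :=
    Finset.single_le_sum (fun i _ => Nat.zero_le (a i)) (Finset.mem_univ i₀)
  have hi₀_mem := hak i₀
  simp only [block, mem_Icc, Fintype.card_fin] at hi₀_mem hsum
  exact Icc_blockStart_subset (h := h) hg (k i₀) ⟨by omega, by omega⟩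

end Blocks

theorem finite_sumset_density_one_general (A : Set ℕ)
    (hA : ubd A = 1) (h : ℕ) (hh : 2 ≤ h) :
    ∃ B : Fin h → Set ℕ,
      (∀ i, B i ⊆ A) ∧
      Pairwise (Function.onFun Disjoint B) ∧
      (∀ i, ubd (B i) = 1) ∧
      {s : ℕ | ∃ a : Fin h → ℕ, (∀ i, a i ∈ B i) ∧ s = ∑ i, a i} ⊆ A := by
  have : NeZero h := ⟨by omega⟩
  choose g hg_ge hg using fun b => exists_ge_Icc_subset (exists_Icc_subset_of_ubd_eq_one hA) b b
  refine ⟨blockUnion g h, blockUnion_subset hg, pairwise_disjoint_blockUnion hg_ge,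
    fun i => ubd_eq_one_of_forall_Icc_subset (exists_Icc_subset_blockUnion i), ?_⟩
  rintro _ ⟨a, ha, rfl⟩
  exact sum_mem_of_mem_blockUnion hg_ge hg a ha

theorem finite_sumset_density_one (A : Set ℕ) (hApos : ∀ a ∈ A, 0 < a)
    (hA : ubd A = 1) (h : ℕ) (hh : 2 ≤ h) :
    ∃ B : Fin h → Set ℕ,
      (∀ i, B i ⊆ A) ∧
      Pairwise (Function.onFun Disjoint B) ∧
      (∀ i, ubd (B i) = 1) ∧
      {s : ℕ | ∃ a : Fin h → ℕ, (∀ i, a i ∈ B i) ∧ s = ∑ i, a i} ⊆ A :=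
  finite_sumset_density_one_general A hA h hh
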